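/- arXiv:2209.14476 — 2 statements merged into one kernel-verified Lean document; each statement's English description precedes it below -/
import Mathlib

section
/- Let G be a maximal outerplanar graph of order n with k ≥ 1 internal triangles. Then k ≤ ⌊n/2⌋ − 2. -/
open SimpleGraph

/-- A general position set: no vertex of `S` lies on a geodesic between two
other vertices of `S`. -/
def IsGPSet {V : Type*} (G : SimpleGraph V) (S : Set V) : Prop :=
  ∀ ⦃u v w : V⦄, u ∈ S → v ∈ S → w ∈ S → u ≠ v → v ≠ w → u ≠ w →
    G.dist u w ≠ G.dist u v + G.dist v w

/-- The general position number of a graph. -/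
noncomputable def gpNumber {V : Type*} (G : SimpleGraph V) : ℕ :=
  sSup {k | ∃ S : Set V, IsGPSet G S ∧ S.ncard = k}

/-- Degree of a vertex (as the cardinality of its neighborhood). -/
noncomputable def degSet {V : Type*} (G : SimpleGraph V) (v : V) : ℕ :=
  (G.neighborSet v).ncard

/-- Maximum degree of a graph on `Fin n`. -/
noncomputable def maxDeg {n : ℕ} (G : SimpleGraph (Fin n)) : ℕ :=
  Finset.univ.sup (fun v => degSet G v)

/-- `x` lies strictly (clockwise) between `a` and `b` on the cycle `Fin n`. -/
def StrictBtw {n : ℕ} (a x b : Fin n) : Prop :=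
  0 < (x - a).val ∧ (x - a).val < (b - a).val

/-- Chords `ab` and `cd` of the cycle `Fin n` cross each other. -/
def Crossing {n : ℕ} (a b c d : Fin n) : Prop :=
  StrictBtw a c b ∧ StrictBtw b d a

/-- `G` is a maximal outerplanar (outerplane) graph, presented with its unique
Hamiltonian cycle `0, 1, …, n-1`: all chords are pairwise non-crossing, and no
further non-crossing chord can be added (a triangulation of an `n`-gon). -/
def IsMOPFin (n : ℕ) [NeZero n] (G : SimpleGraph (Fin n)) : Prop :=
  3 ≤ n ∧
  (∀ i : Fin n, G.Adj i (i + 1)) ∧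
  (∀ a b c d : Fin n, G.Adj a b → G.Adj c d → ¬ Crossing a b c d) ∧
  (∀ a b : Fin n, a ≠ b → ¬ G.Adj a b → ∃ c d : Fin n, G.Adj c d ∧ Crossing a b c d)

/-- The internal triangles of a maximal outerplane graph on `Fin n`:
triangles none of whose edges lies on the Hamiltonian cycle. -/
def InternalTriangles (n : ℕ) [NeZero n] (G : SimpleGraph (Fin n)) : Set (Finset (Fin n)) :=
  {T | T.card = 3 ∧ (∀ a ∈ T, ∀ b ∈ T, a ≠ b → G.Adj a b) ∧
    ∀ a ∈ T, ∀ b ∈ T, b ≠ a + 1}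

/-- The fan graph `F_m = K₁ ⊕ P_m`: the join of the central vertex `none`
with a path on `m` vertices. -/
def fanGraph (m : ℕ) : SimpleGraph (Option (Fin m)) where
  Adj x y :=
    match x, y with
    | none, none => False
    | none, some _ => True
    | some _, none => True
    | some i, some j => i.val + 1 = j.val ∨ j.val + 1 = i.val
  symm := by
    constructor
    intro x y h
    cases x <;> cases y <;> simp_all <;> omega
  loopless := by
    constructor
    intro x h
    cases x <;> simp_all

/-- The straight linear 2-tree: `vᵢ ~ vⱼ` iff `0 < |i - j| ≤ 2`. -/
def linear2Tree (n : ℕ) : SimpleGraph (Fin n) where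
  Adj i j := i ≠ j ∧ i.val ≤ j.val + 2 ∧ j.val ≤ i.val + 2
  symm := by
    constructor
    intro i j h
    exact ⟨h.1.symm, h.2.2, h.2.1⟩
  loopless := by
    constructor
    intro i h
    exact h.1 rfl

/-- The generalized sunflower graph built from a base graph `G0` on the cycle
`h_0 … h_{m-1}` by attaching `x` new vertices `v_0, …, v_{x-1}`,
where `v_i` is joined to `h_i` and `h_{(i+1) mod m}`. -/
def GSF (m x : ℕ) (G0 : SimpleGraph (Fin m)) : SimpleGraph (Fin m ⊕ Fin x) where
  Adj a b :=
    match a, b with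
    | .inl u, .inl v => G0.Adj u v
    | .inl u, .inr i => u.val = i.val ∨ u.val = (i.val + 1) % m
    | .inr i, .inl u => u.val = i.val ∨ u.val = (i.val + 1) % m
    | .inr _, .inr _ => False
  symm := by
    constructor
    intro a b h
    cases a <;> cases b <;> simp_all [SimpleGraph.adj_comm]
  loopless := by
    constructor
    intro a h
    cases a <;> simp_all

/-- `G` contains `K₄` as a minor: there exist four nonempty, pairwise disjoint,
connected branch sets that are pairwise joined by an edge. -/
def HasK4Minor {V : Type*} (G : SimpleGraph V) : Prop :=
  ∃ B : Fin 4 → Set V,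
    (∀ i, (B i).Nonempty) ∧
    (∀ i, (G.induce (B i)).Connected) ∧
    (∀ i j, i ≠ j → Disjoint (B i) (B j)) ∧
    (∀ i j, i ≠ j → ∃ a ∈ B i, ∃ b ∈ B j, G.Adj a b)

/-!
Generalise from the `n`-gon to the convex polygon on a vertex set `R ⊆ Fin n` and a family `S` of
pairwise non-crossing triangles on `R`, none of which has a side of the polygon: then
`2 * #S + 4 ≤ #R`. A single such triangle needs a vertex of `R` in each of its three gaps, hence
six vertices. Otherwise some side `uv` of a triangle `T` separates `T` from another triangle `T'`,
and every triangle lies on one side of `uv`. Cut the polygon along `uv`, keeping on each side one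
extra vertex from the other side (the third vertex of `T`, resp. a vertex of `T'`) so that no
triangle acquires a polygon side. The two pieces meet only in `u` and `v`, so their vertex counts
add up to `#R + 4`, and induction on `#S` closes the argument. The internal triangles of a maximal
outerplanar graph form such a family on all of `Fin n`.
-/

open Finset

section

variable {n : ℕ}

lemma Fin.val_sub_eq_ite (x a : Fin n) :
    (x - a).val = if a ≤ x then x.val - a.val else n + x.val - a.val := by
  split_ifs with h
  · exact Fin.sub_val_of_le h
  · exact Fin.coe_sub_iff_lt.mpr (not_le.mp h)

lemma Fin.val_sub_self (a : Fin n) : (a - a).val = 0 := by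
  simp [Fin.val_sub_eq_ite]

lemma Fin.eq_of_val_sub_eq {a x y : Fin n} (h : (x - a).val = (y - a).val) : x = y := by
  simp only [Fin.val_sub_eq_ite, Fin.le_iff_val_le_val, Fin.ext_iff] at *
  split_ifs at * <;> omega

lemma StrictBtw.ne_left {a x b : Fin n} (h : StrictBtw a x b) : x ≠ a := by
  rintro rfl
  exact h.1.ne' (Fin.val_sub_self x)

lemma StrictBtw.ne_right {a x b : Fin n} (h : StrictBtw a x b) : x ≠ b := by
  rintro rfl
  exact h.2.false

lemma StrictBtw.left_ne_right {a x b : Fin n} (h : StrictBtw a x b) : a ≠ b := by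
  rintro rfl
  exact (h.1.trans h.2).ne' (Fin.val_sub_self a)

lemma StrictBtw.rotate {a b c : Fin n} (h : StrictBtw a b c) : StrictBtw b c a := by
  simp only [StrictBtw, Fin.val_sub_eq_ite, Fin.le_iff_val_le_val] at *
  split_ifs at * <;> omega

lemma strictBtw_or_strictBtw_swap {a b c : Fin n} (hab : a ≠ b) (hac : a ≠ c) (hbc : b ≠ c) :
    StrictBtw a b c ∨ StrictBtw a c b := by
  simp only [StrictBtw, Fin.val_sub_eq_ite, Fin.le_iff_val_le_val, ne_eq, Fin.ext_iff] at *
  split_ifs at * <;> omega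

lemma StrictBtw.trichotomy {a b c x : Fin n} (h : StrictBtw a b c) (hxa : x ≠ a) (hxb : x ≠ b)
    (hxc : x ≠ c) : StrictBtw a x b ∨ StrictBtw b x c ∨ StrictBtw c x a := by
  simp only [StrictBtw, Fin.val_sub_eq_ite, Fin.le_iff_val_le_val, ne_eq, Fin.ext_iff] at *
  split_ifs at * <;> omega

lemma strictBtw_iff_of_val_sub_lt {a p q : Fin n} (h : (p - a).val < (q - a).val) (y : Fin n) :
    StrictBtw p y q ↔ (p - a).val < (y - a).val ∧ (y - a).val < (q - a).val := by
  simp only [StrictBtw, Fin.val_sub_eq_ite, Fin.le_iff_val_le_val] at *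
  split_ifs at * <;> omega

lemma strictBtw_iff_of_val_sub_gt {a p q : Fin n} (h : (q - a).val < (p - a).val) (y : Fin n) :
    StrictBtw p y q ↔ (p - a).val < (y - a).val ∨ (y - a).val < (q - a).val := by
  simp only [StrictBtw, Fin.val_sub_eq_ite, Fin.le_iff_val_le_val] at *
  split_ifs at * <;> omega

lemma strictBtw_add_one [NeZero n] {p q : Fin n} (hpq : p ≠ q) (hq : q ≠ p + 1) :
    StrictBtw p (p + 1) q := by
  have hqp : q - p ≠ 0 := sub_ne_zero.mpr hpq.symm
  have hqp' : q - p ≠ 1 := fun h => hq (eq_add_of_sub_eq' h)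
  have hn : 1 < n := Fin.nontrivial_iff_two_le.mp ⟨p, q, hpq⟩
  simp only [StrictBtw, add_sub_cancel_left, Fin.val_one', Nat.mod_eq_of_lt hn]
  simp only [ne_eq, Fin.ext_iff, Fin.val_zero, Fin.val_one', Nat.mod_eq_of_lt hn] at hqp hqp'
  omega

/-- The closed clockwise arc of the cycle `Fin n` from `u` to `v`. -/
def closedArc (u v : Fin n) : Finset (Fin n) :=
  univ.filter fun y => (y - u).val ≤ (v - u).val

lemma mem_closedArc {u v y : Fin n} : y ∈ closedArc u v ↔ (y - u).val ≤ (v - u).val := by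
  simp [closedArc]

lemma StrictBtw.mem_closedArc {u v y : Fin n} (h : StrictBtw u y v) : y ∈ closedArc u v :=
  _root_.mem_closedArc.mpr h.2.le

lemma StrictBtw.not_mem_closedArc {u v y : Fin n} (h : StrictBtw u y v) :
    y ∉ closedArc v u := by
  simp only [StrictBtw, _root_.mem_closedArc, Fin.val_sub_eq_ite, Fin.le_iff_val_le_val] at *
  split_ifs at * <;> omega

lemma mem_closedArc_or_strictBtw {u v : Fin n} (huv : u ≠ v) (y : Fin n) :
    y ∈ closedArc u v ∨ StrictBtw v y u := by
  simp only [StrictBtw, mem_closedArc, Fin.val_sub_eq_ite, Fin.le_iff_val_le_val, ne_eq,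
    Fin.ext_iff] at *
  split_ifs at * <;> omega

lemma strictBtw_or_forall_mem_closedArc {u v w p q : Fin n} (hvwu : StrictBtw v w u)
    (hp : p ∈ closedArc u v) (hq : q ∈ closedArc u v) (hpq : p ≠ q) :
    StrictBtw p w q ∨ ∀ y, StrictBtw p y q → y ∈ closedArc u v := by
  have hW := hvwu.rotate.rotate.2
  rw [mem_closedArc] at hp hq
  rcases lt_trichotomy (p - u).val (q - u).val with hlt | heq | hgt
  · right
    intro y hy
    rw [strictBtw_iff_of_val_sub_lt hlt] at hy
    exact mem_closedArc.mpr (by omega)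
  · exact absurd (Fin.eq_of_val_sub_eq heq) hpq
  · left
    rw [strictBtw_iff_of_val_sub_gt hgt]
    omega

lemma closedArc_inter_closedArc (u v : Fin n) : closedArc u v ∩ closedArc v u = {u, v} := by
  ext y
  simp only [mem_inter, mem_closedArc, mem_insert, mem_singleton, Fin.val_sub_eq_ite,
    Fin.le_iff_val_le_val, Fin.ext_iff]
  split_ifs <;> omega

lemma card_inter_closedArc_add_card_inter_closedArc {R : Finset (Fin n)} {u v : Fin n}
    (hu : u ∈ R) (hv : v ∈ R) (huv : u ≠ v) :
    (R ∩ closedArc u v).card + (R ∩ closedArc v u).card = R.card + 2 := by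
  have hunion : R ∩ closedArc u v ∪ R ∩ closedArc v u = R := by
    rw [← inter_union_distrib_left, inter_eq_left]
    intro y _
    rw [mem_union]
    exact (mem_closedArc_or_strictBtw huv y).imp_right StrictBtw.mem_closedArc
  have hinter : R ∩ closedArc u v ∩ (R ∩ closedArc v u) = {u, v} := by
    rw [← inter_inter_distrib_left, closedArc_inter_closedArc, inter_eq_right]
    exact insert_subset hu (singleton_subset_iff.mpr hv)
  rw [← card_union_add_card_inter, hunion, hinter, card_pair huv]

lemma exists_eq_strictBtw_of_card_eq_three {T : Finset (Fin n)} (hT : T.card = 3) :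
    ∃ a b c, T = {a, b, c} ∧ StrictBtw a b c := by
  obtain ⟨a, b, c, hab, hac, hbc, rfl⟩ := card_eq_three.mp hT
  rcases strictBtw_or_strictBtw_swap hab hac hbc with h | h
  · exact ⟨a, b, c, rfl, h⟩
  · exact ⟨a, c, b, by rw [pair_comm], h⟩

lemma exists_side_strictBtw {T : Finset (Fin n)} (hT : T.card = 3) {x : Fin n} (hx : x ∉ T) :
    ∃ u ∈ T, ∃ v ∈ T, ∃ w ∈ T, StrictBtw u x v ∧ StrictBtw v w u := by
  obtain ⟨a, b, c, rfl, h⟩ := exists_eq_strictBtw_of_card_eq_three hT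
  simp only [mem_insert, mem_singleton, not_or] at hx
  rcases h.trichotomy hx.1 hx.2.1 hx.2.2 with hab | hbc | hca
  · exact ⟨a, by simp, b, by simp, c, by simp, hab, h.rotate⟩
  · exact ⟨b, by simp, c, by simp, a, by simp, hbc, h.rotate.rotate⟩
  · exact ⟨c, by simp, a, by simp, b, by simp, hca, h⟩

/-- `S` is a family of pairwise non-crossing triangles inscribed in the convex polygon with
vertex set `R` (in the cyclic order of `Fin n`), none of which has a side of that polygon. -/
structure IsInternalTriangleFamily (R : Finset (Fin n)) (S : Finset (Finset (Fin n))) :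
    Prop where
  card_eq : ∀ T ∈ S, T.card = 3
  subset : ∀ T ∈ S, T ⊆ R
  not_crossing : ∀ T ∈ S, ∀ T' ∈ S, ∀ p ∈ T, ∀ q ∈ T, ∀ p' ∈ T', ∀ q' ∈ T',
    p ≠ q → p' ≠ q' → ¬ Crossing p q p' q'
  exists_strictBtw : ∀ T ∈ S, ∀ p ∈ T, ∀ q ∈ T, p ≠ q → ∃ y ∈ R, StrictBtw p y q

namespace IsInternalTriangleFamily

variable {R : Finset (Fin n)} {S : Finset (Finset (Fin n))}

theorem six_le_card (hS : IsInternalTriangleFamily R S) {T : Finset (Fin n)} (hT : T ∈ S) :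
    6 ≤ R.card := by
  obtain ⟨a, b, c, rfl, habc⟩ := exists_eq_strictBtw_of_card_eq_three (hS.card_eq _ hT)
  have hR := hS.subset _ hT
  simp only [insert_subset_iff, singleton_subset_iff] at hR
  have hgap := hS.exists_strictBtw _ hT
  obtain ⟨y₁, hy₁, h₁⟩ := hgap a (by simp) b (by simp) habc.ne_left.symm
  obtain ⟨y₂, hy₂, h₂⟩ := hgap b (by simp) c (by simp) habc.ne_right
  obtain ⟨y₃, hy₃, h₃⟩ := hgap c (by simp) a (by simp) habc.left_ne_right.symm
  -- measured clockwise from `a`, the six vertices `a, y₁, b, y₂, c, y₃` come in this order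
  have hca : (a - a).val < (c - a).val := by rw [Fin.val_sub_self]; exact habc.1.trans habc.2
  rw [strictBtw_iff_of_val_sub_lt habc.2] at h₂
  rw [strictBtw_iff_of_val_sub_gt hca] at h₃
  have hsorted :
      List.Pairwise (· < ·) ([a, y₁, b, y₂, c, y₃].map fun x => (x - a).val) := by
    simp only [StrictBtw, Fin.val_sub_self] at habc h₁ h₃
    simp [Fin.val_sub_self]
    omega
  have hnodup : [a, y₁, b, y₂, c, y₃].Nodup := List.Nodup.of_map _ (hsorted.imp ne_of_lt)
  calc 6 = [a, y₁, b, y₂, c, y₃].toFinset.card := (List.toFinset_card_of_nodup hnodup).symm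
    _ ≤ R.card := card_le_card (by simp [insert_subset_iff, *])

theorem subset_closedArc_or_subset_closedArc (hS : IsInternalTriangleFamily R S)
    {T t : Finset (Fin n)} (hT : T ∈ S) (ht : t ∈ S) {u v : Fin n} (hu : u ∈ T) (hv : v ∈ T)
    (huv : u ≠ v) : t ⊆ closedArc u v ∨ t ⊆ closedArc v u := by
  by_cases hinside : ∃ y ∈ t, StrictBtw u y v
  · obtain ⟨y, hy, huyv⟩ := hinside
    left
    intro z hz
    refine (mem_closedArc_or_strictBtw huv z).resolve_right fun hvzu => ?_
    have hyz : y ≠ z := by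
      rintro rfl
      exact hvzu.not_mem_closedArc huyv.mem_closedArc
    exact hS.not_crossing T hT t ht u hu v hv y hy z hz huv hyz ⟨huyv, hvzu⟩
  · push Not at hinside
    right
    intro z hz
    exact (mem_closedArc_or_strictBtw huv.symm z).resolve_right (hinside z hz)

theorem restrict_closedArc (hS : IsInternalTriangleFamily R S) {u v w : Fin n}
    (hvwu : StrictBtw v w u) :
    IsInternalTriangleFamily (insert w (R ∩ closedArc u v))
      (S.filter (· ⊆ closedArc u v)) where
  card_eq T hT := hS.card_eq T (mem_filter.mp hT).1
  subset T hT := by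
    obtain ⟨hTS, hTuv⟩ := mem_filter.mp hT
    exact (subset_inter (hS.subset T hTS) hTuv).trans (subset_insert _ _)
  not_crossing T hT T' hT' := hS.not_crossing T (mem_filter.mp hT).1 T' (mem_filter.mp hT').1
  exists_strictBtw T hT p hp q hq hpq := by
    obtain ⟨hTS, hTuv⟩ := mem_filter.mp hT
    rcases strictBtw_or_forall_mem_closedArc hvwu (hTuv hp) (hTuv hq) hpq with hpwq | hpq_arc
    · exact ⟨w, mem_insert_self _ _, hpwq⟩
    · obtain ⟨y, hy, hpyq⟩ := hS.exists_strictBtw T hTS p hp q hq hpq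
      exact ⟨y, mem_insert_of_mem (mem_inter.mpr ⟨hy, hpq_arc y hpyq⟩), hpyq⟩

theorem two_mul_card_add_four_le (hS : IsInternalTriangleFamily R S) (hne : S.Nonempty) :
    2 * S.card + 4 ≤ R.card := by
  induction S using Finset.strongInduction generalizing R with
  | H S ih =>
  obtain ⟨T, hT⟩ := hne
  by_cases hsingle : S = {T}
  · subst hsingle
    simpa using hS.six_le_card hT
  obtain ⟨T', hT', hT'T⟩ : ∃ T' ∈ S, T' ≠ T := by
    by_contra! h
    exact hsingle (eq_singleton_iff_unique_mem.mpr ⟨hT, h⟩)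
  obtain ⟨x, hxT', hxT⟩ : ∃ x ∈ T', x ∉ T := not_subset.mp fun h =>
    hT'T (eq_of_subset_of_card_le h (by rw [hS.card_eq T hT, hS.card_eq T' hT']))
  -- cut along the side `uv` of `T` separating `T` from the vertex `x` of `T'`
  obtain ⟨u, hu, v, hv, w, hw, huxv, hvwu⟩ := exists_side_strictBtw (hS.card_eq T hT) hxT
  have huv := huxv.left_ne_right
  set S₁ := S.filter (· ⊆ closedArc u v)
  set S₂ := S.filter (· ⊆ closedArc v u)
  have hTS₁ : T ∉ S₁ := fun h => hvwu.not_mem_closedArc ((mem_filter.mp h).2 hw)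
  have hT'S₂ : T' ∉ S₂ := fun h => huxv.not_mem_closedArc ((mem_filter.mp h).2 hxT')
  have hT'S₁ : T' ∈ S₁ := mem_filter.mpr ⟨hT',
    (hS.subset_closedArc_or_subset_closedArc hT hT' hu hv huv).resolve_right
      fun h => huxv.not_mem_closedArc (h hxT')⟩
  have hTS₂ : T ∈ S₂ := mem_filter.mpr ⟨hT,
    (hS.subset_closedArc_or_subset_closedArc hT hT hu hv huv).resolve_left
      fun h => hvwu.not_mem_closedArc (h hw)⟩
  have h₁ := ih S₁ (ssubset_of_subset_of_ne (filter_subset _ _) fun h => hTS₁ (h ▸ hT))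
    (hS.restrict_closedArc hvwu) ⟨T', hT'S₁⟩
  have h₂ := ih S₂ (ssubset_of_subset_of_ne (filter_subset _ _) fun h => hT'S₂ (h ▸ hT'))
    (hS.restrict_closedArc huxv) ⟨T, hTS₂⟩
  have hS_card : S₁.card + S₂.card = S.card := by
    rw [← card_union_of_disjoint, ← filter_or,
      filter_true_of_mem fun t ht => hS.subset_closedArc_or_subset_closedArc hT ht hu hv huv]
    refine disjoint_filter.mpr fun t ht htuv htvu => ?_
    have := card_le_card (subset_inter htuv htvu)
    rw [closedArc_inter_closedArc, hS.card_eq t ht] at this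
    exact absurd (this.trans card_le_two) (by norm_num)
  have hR :=
    card_inter_closedArc_add_card_inter_closedArc (hS.subset T hT hu) (hS.subset T hT hv) huv
  rw [card_insert_of_notMem (mt (mem_inter.mp · |>.2) hvwu.not_mem_closedArc)] at h₁
  rw [card_insert_of_notMem (mt (mem_inter.mp · |>.2) huxv.not_mem_closedArc)] at h₂
  omega

end IsInternalTriangleFamily

theorem isInternalTriangleFamily_internalTriangles [NeZero n] {G : SimpleGraph (Fin n)}
    (hG : IsMOPFin n G) :
    IsInternalTriangleFamily univ (Set.toFinite (InternalTriangles n G)).toFinset where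
  card_eq _ hT := ((Set.Finite.mem_toFinset _).mp hT).1
  subset _ _ := subset_univ _
  not_crossing _ hT _ hT' p hp q hq p' hp' q' hq' hpq hpq' :=
    hG.2.2.1 p q p' q' (((Set.Finite.mem_toFinset _).mp hT).2.1 p hp q hq hpq)
      (((Set.Finite.mem_toFinset _).mp hT').2.1 p' hp' q' hq' hpq')
  exists_strictBtw _ hT p hp q hq hpq :=
    ⟨p + 1, mem_univ _,
      strictBtw_add_one hpq (((Set.Finite.mem_toFinset _).mp hT).2.2 p hp q hq)⟩

end

/-- A maximal outerplanar graph of order `n` with `k ≥ 1`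
internal triangles satisfies `k ≤ ⌊n/2⌋ - 2`. -/
theorem stmt_12 (n k : ℕ) [NeZero n] (G : SimpleGraph (Fin n))
    (hG : IsMOPFin n G) (hk : (InternalTriangles n G).ncard = k) (hk1 : 1 ≤ k) :
    k ≤ n / 2 - 2 := by
  have hcard := Set.ncard_eq_toFinset_card (InternalTriangles n G)
  have hne : (Set.toFinite (InternalTriangles n G)).toFinset.Nonempty := by
    rw [← card_pos, ← hcard, hk]
    exact hk1
  have := (isInternalTriangleFamily_internalTriangles hG).two_mul_card_add_four_le hne
  rw [card_univ, Fintype.card_fin, ← hcard, hk] at this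
  omega
end

section
/- Let G be a maximal outerplanar graph of order n ≥ 6 with Hamiltonian cycle H, let R be a general position set of G with |R| ≥ 5, and let u, v, w be three consecutive vertices on H. Then at most two of u, v, w belong to R. -/
open SimpleGraph

/-!
If `u` and `u + 2` are not adjacent, then `u + 1` lies on a `u, (u + 2)`-geodesic of length two.
If they are, the chord `u (u + 2)` crosses every other edge at `u + 1`, so the only neighbours of
`u + 1` are `u` and `u + 2`. A geodesic from `u + 1` to any further vertex `x ∈ R` then starts
through `u` or `u + 2`, which lies between `u + 1` and `x`; hence `R ⊆ {u, u + 1, u + 2}`.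
-/

namespace SimpleGraph

variable {V : Type*} {G : SimpleGraph V} {R : Set V}

lemma IsGPSet.adj_of_adj_of_adj (hR : IsGPSet G R) {u v w : V} (hu : u ∈ R) (hv : v ∈ R)
    (hw : w ∈ R) (huw : u ≠ w) (huv : G.Adj u v) (hvw : G.Adj v w) : G.Adj u w := by
  by_contra hnadj
  have hlt : 1 < G.dist u w :=
    (huv.reachable.trans hvw.reachable).one_lt_dist_of_ne_of_not_adj huw hnadj
  have hle : G.dist u w ≤ 2 := dist_le (.cons huv (.cons hvw .nil))
  apply hR hu hv hw huv.ne hvw.ne huw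
  rw [dist_eq_one_iff_adj.mpr huv, dist_eq_one_iff_adj.mpr hvw]
  omega

lemma IsGPSet.subset_insert_neighborSet (hR : IsGPSet G R) (hG : G.Preconnected) {v : V}
    (hv : v ∈ R) (hN : G.neighborSet v ⊆ R) : R ⊆ insert v (G.neighborSet v) := by
  intro x hx
  by_contra hxN
  simp only [Set.mem_insert_iff, mem_neighborSet, not_or] at hxN
  obtain ⟨hxv, hnadj⟩ := hxN
  obtain ⟨p, hp⟩ := (hG v x).exists_walk_length_eq_dist
  cases p with
  | nil => exact hxv rfl
  | @cons _ y _ hvy q =>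
    have hyx : y ≠ x := by rintro rfl; exact hnadj hvy
    have hge : G.dist y x + 1 ≤ G.dist v x := by
      rw [← hp, Walk.length_cons]; exact Nat.succ_le_succ (dist_le q)
    have hle : G.dist v x ≤ G.dist v y + G.dist y x := q.reachable.dist_triangle_right v
    apply hR hv (hN hvy) hx hvy.ne hyx (Ne.symm hxv)
    rw [dist_eq_one_iff_adj.mpr hvy] at hle ⊢
    omega

end SimpleGraph

lemma Fin.val_lt_val_neg_two {n : ℕ} [NeZero n] (hn : 3 ≤ n) {k : Fin n} (h1 : k ≠ -1)
    (h2 : k ≠ -2) : k.val < (-2 : Fin n).val := by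
  have hval1 : (-1 : Fin n).val = n - 1 := by
    rw [Fin.val_neg', Fin.val_one', Nat.mod_eq_of_lt (a := 1) (by omega),
      Nat.mod_eq_of_lt (by omega)]
  have hval2 : (-2 : Fin n).val = n - 2 := by
    rw [Fin.val_neg', Fin.coe_ofNat_eq_mod, Nat.mod_eq_of_lt (a := 2) (by omega),
      Nat.mod_eq_of_lt (by omega)]
  rw [ne_eq, Fin.ext_iff, hval1] at h1
  rw [ne_eq, Fin.ext_iff, hval2] at h2
  rw [hval2]
  have := k.isLt
  omega

lemma cycleGraph_le_of_adj_add_one {n : ℕ} [NeZero n] {G : SimpleGraph (Fin n)}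
    (h : ∀ i : Fin n, G.Adj i (i + 1)) : cycleGraph n ≤ G := by
  have hsucc : ∀ {a b : Fin n}, (a - b).val = 1 → G.Adj b a := by
    intro a b hab
    have hone : a - b = 1 := by
      ext; rw [hab, Fin.val_one', Nat.mod_eq_of_lt (by omega)]
    rw [sub_eq_iff_eq_add'] at hone
    exact hone ▸ h b
  intro a b hab
  rcases cycleGraph_adj'.mp hab with hab | hab
  · exact (hsucc hab).symm
  · exact hsucc hab

lemma neighborSet_add_one_subset_of_adj_add_two {n : ℕ} [NeZero n] (hn : 3 ≤ n)
    {G : SimpleGraph (Fin n)}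
    (hnc : ∀ a b c d : Fin n, G.Adj a b → G.Adj c d → ¬ Crossing a b c d)
    {u : Fin n} (h : G.Adj u (u + 2)) : G.neighborSet (u + 1) ⊆ {u, u + 2} := by
  intro y hy
  by_contra hy'
  simp only [Set.mem_insert_iff, Set.mem_singleton_iff, not_or] at hy'
  obtain ⟨hyu, hyw⟩ := hy'
  apply hnc u (u + 2) (u + 1) y h hy
  refine ⟨?_, ?_⟩
  · have h1n : 1 % n = 1 := Nat.mod_eq_of_lt (by omega)
    have h2n : 2 % n = 2 := Nat.mod_eq_of_lt (by omega)
    simp [StrictBtw, h1n, h2n]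
  · have hk0 : y - (u + 2) ≠ 0 := sub_ne_zero.mpr hyw
    have hk1 : y - (u + 2) ≠ -1 := by
      rw [ne_eq, sub_eq_iff_eq_add]; rintro rfl; apply hy.ne; grind
    have hk2 : y - (u + 2) ≠ -2 := by
      rw [ne_eq, sub_eq_iff_eq_add]; rintro rfl; apply hyu; grind
    rw [StrictBtw, sub_add_cancel_left]
    exact ⟨Nat.pos_of_ne_zero (Fin.val_ne_zero_iff.mpr hk0), Fin.val_lt_val_neg_two hn hk1 hk2⟩

theorem stmt_14_general (n : ℕ) [NeZero n] (G : SimpleGraph (Fin n))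
    (hG : IsMOPFin n G) (R : Set (Fin n)) (hR : IsGPSet G R)
    (hcard : 5 ≤ R.ncard) (u : Fin n) :
    ¬ (u ∈ R ∧ u + 1 ∈ R ∧ u + 2 ∈ R) := by
  obtain ⟨hn, hcycle, hnoncross, -⟩ := hG
  rintro ⟨hu, hv, hw⟩
  by_cases hchord : G.Adj u (u + 2)
  · have hN := neighborSet_add_one_subset_of_adj_add_two hn hnoncross hchord
    have hconn : G.Preconnected :=
      cycleGraph_preconnected.mono (cycleGraph_le_of_adj_add_one hcycle)
    have hNR : G.neighborSet (u + 1) ⊆ R :=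
      hN.trans (by simp [Set.insert_subset_iff, hu, hw])
    have hsub : R ⊆ {u + 1, u, u + 2} :=
      (hR.subset_insert_neighborSet hconn hv hNR).trans (Set.insert_subset_insert hN)
    have hle : R.ncard ≤ 3 := by
      refine (Set.ncard_le_ncard hsub).trans ?_
      rw [← Finset.coe_pair, ← Finset.coe_insert, Set.ncard_coe_finset]
      exact Finset.card_le_three
    omega
  · have huw : u ≠ u + 2 := by
      have h2n : 2 % n = 2 := Nat.mod_eq_of_lt (by omega)
      simp [Fin.ext_iff, h2n]
    have hvw : G.Adj (u + 1) (u + 2) := by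
      convert hcycle (u + 1) using 1; grind
    exact hchord (hR.adj_of_adj_of_adj hu hv hw huw (hcycle u) hvw)

/-- In a maximal outerplanar graph of order `n ≥ 6`, if `R` is a
general position set with `|R| ≥ 5`, then among any three consecutive vertices
`u, u+1, u+2` of the Hamiltonian cycle at most two belong to `R`. -/
theorem stmt_14 (n : ℕ) [NeZero n] (hn : 6 ≤ n) (G : SimpleGraph (Fin n))
    (hG : IsMOPFin n G) (R : Set (Fin n)) (hR : IsGPSet G R)
    (hcard : 5 ≤ R.ncard) (u : Fin n) :
    ¬ (u ∈ R ∧ u + 1 ∈ R ∧ u + 2 ∈ R) :=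
  stmt_14_general n G hG R hR hcard u
end
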